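/- For all nonnegative integers t and n, d(4t, 4n+1) = d(2t, 2n) and d(4t, 4n+3) = d(2t, 2n+1), where d(t,n) = r(n+t) − r(n). -/

import Mathlib

/-- `r n` counts indices `j ≥ 0` with the `j`-th and `(j+1)`-st binary digits of `n` both `1`. -/
def r (n : ℕ) : ℕ :=
  ((Finset.range (n + 1)).filter (fun j => n.testBit j ∧ n.testBit (j + 1))).card

/-- `d t n = r (n + t) - r n` as an integer. -/
def d (t n : ℕ) : ℤ := (r (n + t) : ℤ) - (r n : ℤ)

/-! Appending a binary digit `1` to `k` keeps every block `11` of `k` and creates one more exactly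
when the last digit of `k` is `1`: `r (2k+1) = r k + k mod 2`. For `k = 2m` and `k = 2m+1` this
gives `r (4m+1) = r (2m)` and `r (4m+3) = r (2m+1) + 1`, and the constant shifts cancel in the
differences `d`. -/

lemma lt_of_testBit {n j : ℕ} (h : n.testBit j) : j < n :=
  Nat.lt_two_pow_self.trans_le (Nat.ge_two_pow_of_testBit h)

lemma r_eq_card_filter_range {n N : ℕ} (hN : n < N) :
    r n = ((Finset.range N).filter (fun j => n.testBit j ∧ n.testBit (j + 1))).card := by
  unfold r
  congr 1
  ext j
  simp only [Finset.mem_filter, Finset.mem_range]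
  constructor
  · rintro ⟨-, hj⟩
    exact ⟨(lt_of_testBit hj.1).trans hN, hj⟩
  · rintro ⟨-, hj⟩
    exact ⟨(lt_of_testBit hj.1).trans (Nat.lt_succ_self n), hj⟩

lemma testBit_two_mul_add_one_succ (k j : ℕ) : (2 * k + 1).testBit (j + 1) = k.testBit j := by
  rw [Nat.testBit_add_one]
  congr 1
  omega

lemma r_two_mul_add_one (k : ℕ) : r (2 * k + 1) = r k + k % 2 := by
  have hk : r k = ∑ j ∈ Finset.range (2 * k + 1),
      if k.testBit j ∧ k.testBit (j + 1) then 1 else 0 := by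
    rw [r_eq_card_filter_range (by omega : k < 2 * k + 1), Finset.card_filter]
  rw [r, Finset.card_filter, Finset.sum_range_succ']
  simp only [testBit_two_mul_add_one_succ, ← hk, Nat.zero_add]
  rcases Nat.mod_two_eq_zero_or_one k with h | h <;> simp [Nat.testBit_zero, h]

lemma r_four_mul_add_one (m : ℕ) : r (4 * m + 1) = r (2 * m) := by
  have := r_two_mul_add_one (2 * m)
  rw [show 2 * (2 * m) + 1 = 4 * m + 1 by ring] at this
  omega

lemma r_four_mul_add_three (m : ℕ) : r (4 * m + 3) = r (2 * m + 1) + 1 := by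
  have := r_two_mul_add_one (2 * m + 1)
  rw [show 2 * (2 * m + 1) + 1 = 4 * m + 3 by ring] at this
  omega

theorem d_rec (t n : ℕ) :
    d (4 * t) (4 * n + 1) = d (2 * t) (2 * n) ∧
    d (4 * t) (4 * n + 3) = d (2 * t) (2 * n + 1) := by
  constructor
  · rw [d, d, show 4 * n + 1 + 4 * t = 4 * (n + t) + 1 by ring,
      show 2 * n + 2 * t = 2 * (n + t) by ring, r_four_mul_add_one, r_four_mul_add_one]
  · rw [d, d, show 4 * n + 3 + 4 * t = 4 * (n + t) + 3 by ring,
      show 2 * n + 1 + 2 * t = 2 * (n + t) + 1 by ring, r_four_mul_add_three,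
      r_four_mul_add_three]
    push_cast
    ring
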